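/- arXiv:2306.17607 — 4 statements merged into one kernel-verified Lean document; each statement's English description precedes it below -/
import Mathlib

section
/- For integers k ≥ 3 and l₁, l₂ ≥ 2, bgr_k(P_4 : C_{2l₁} ∪ C_{2l₂}) = k(l₁ + l₂) − k + 1. -/
open Function Finset SimpleGraph

/-- A rainbow path on 4 vertices `u₁ v₁ u₂ v₂` (middle pattern). -/
def rbP4pat {N : ℕ} {γ : Type*} (c : Fin N → Fin N → γ) : Prop :=
  ∃ u₁ u₂ v₁ v₂ : Fin N, u₁ ≠ u₂ ∧ v₁ ≠ v₂ ∧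
    c u₁ v₁ ≠ c u₂ v₁ ∧ c u₁ v₁ ≠ c u₂ v₂ ∧ c u₂ v₁ ≠ c u₂ v₂

/-- The coloring `c` of `K_{N,N}` contains a rainbow path on 4 vertices. -/
def hasRainbowP4 {N : ℕ} {γ : Type*} (c : Fin N → Fin N → γ) : Prop :=
  rbP4pat c ∨ rbP4pat (fun v u => c u v)

/-- A rainbow path on 5 vertices `u₁ v₁ u₂ v₂ u₃` (one-sided pattern). -/
def rbP5pat {N : ℕ} {γ : Type*} (c : Fin N → Fin N → γ) : Prop :=
  ∃ u₁ u₂ u₃ v₁ v₂ : Fin N, u₁ ≠ u₂ ∧ u₁ ≠ u₃ ∧ u₂ ≠ u₃ ∧ v₁ ≠ v₂ ∧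
    c u₁ v₁ ≠ c u₂ v₁ ∧ c u₁ v₁ ≠ c u₂ v₂ ∧ c u₁ v₁ ≠ c u₃ v₂ ∧
    c u₂ v₁ ≠ c u₂ v₂ ∧ c u₂ v₁ ≠ c u₃ v₂ ∧ c u₂ v₂ ≠ c u₃ v₂

/-- The coloring `c` of `K_{N,N}` contains a rainbow path on 5 vertices. -/
def hasRainbowP5 {N : ℕ} {γ : Type*} (c : Fin N → Fin N → γ) : Prop :=
  rbP5pat c ∨ rbP5pat (fun v u => c u v)

/-- The coloring `c` of `K_{N,N}` contains a rainbow star `K_{1,3}`: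
some vertex (on either side) has three incident edges with pairwise distinct colors. -/
def hasRainbowK13 {N : ℕ} {γ : Type*} (c : Fin N → Fin N → γ) : Prop :=
  (∃ u v₁ v₂ v₃ : Fin N, c u v₁ ≠ c u v₂ ∧ c u v₁ ≠ c u v₃ ∧ c u v₂ ≠ c u v₃) ∨
  (∃ v u₁ u₂ u₃ : Fin N, c u₁ v ≠ c u₂ v ∧ c u₁ v ≠ c u₃ v ∧ c u₂ v ≠ c u₃ v)

/-- The coloring `c` of `K_{N,N}` (first coordinate: side `U`, second: side `V`)
contains a monochromatic copy of the (bipartite) graph `H`. -/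
def hasMonoCopy {N : ℕ} {γ : Type*} {α : Type*} (c : Fin N → Fin N → γ)
    (H : SimpleGraph α) : Prop :=
  ∃ i : γ, ∃ f : α → Fin N ⊕ Fin N, Function.Injective f ∧
    ∀ a b, H.Adj a b → ∃ u v : Fin N, c u v = i ∧
      ((f a = Sum.inl u ∧ f b = Sum.inr v) ∨ (f a = Sum.inr v ∧ f b = Sum.inl u))

/-- The coloring `c` of `K_{N,N}` contains a monochromatic copy of `K_{s,t}`
(in either orientation with respect to the two sides). -/
def hasMonoKst {N : ℕ} {γ : Type*} (c : Fin N → Fin N → γ) (s t : ℕ) : Prop :=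
  ∃ i : γ, ∃ S T : Finset (Fin N),
    ((S.card = s ∧ T.card = t) ∨ (S.card = t ∧ T.card = s)) ∧
    ∀ u ∈ S, ∀ v ∈ T, c u v = i

/-- Disjoint union of a family of graphs, on the sigma type. -/
def sigmaUnion {ι : Type*} {β : ι → Type*} (G : ∀ i, SimpleGraph (β i)) :
    SimpleGraph (Σ i, β i) where
  Adj x y := ∃ i a b, (G i).Adj a b ∧ x = ⟨i, a⟩ ∧ y = ⟨i, b⟩
  symm := ⟨by rintro x y ⟨i, a, b, h, rfl, rfl⟩; exact ⟨i, b, a, h.symm, rfl, rfl⟩⟩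
  loopless := ⟨by
    rintro x ⟨i, a, b, h, rfl, h2⟩
    obtain rfl : a = b := by simpa using h2
    exact (G i).irrefl h⟩


/-- `n` witnesses the bipartite Gallai–Ramsey property for a rainbow `P₄`
versus a monochromatic `C_{2l₁} ∪ C_{2l₂}` with `k` colors. -/
def bgrP4CC (k l1 l2 n : ℕ) : Prop :=
  k ≤ n ^ 2 ∧ ∀ N : ℕ, n ≤ N → ∀ c : Fin N → Fin N → Fin k,
    (∀ i : Fin k, ∃ u v, c u v = i) →
    hasRainbowP4 c ∨ hasMonoCopy c (cycleGraph (2 * l1) ⊕g cycleGraph (2 * l2))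

/-!
Without a rainbow `P₄`, if row `u₀` has two distinct colors then any color `c u v` different
from both also sits at `(u₀, v)`. So once one row has two colors and a third color is used
somewhere, that row has three colors, and then every column is monochromatic. With `k ≥ 3`
colors all rows or all columns are therefore monochromatic, and pigeonhole on
`k (l₁ + l₂ - 1) + 1` lines yields a monochromatic `K_{l₁+l₂,l₁+l₂}`, which contains
`C_{2l₁} ∪ C_{2l₂}`. Conversely, coloring the rows of `K_{ks,ks}`, `s = l₁ + l₂ - 1`, in `k`
blocks of `s` leaves no rainbow `P₄`, while a monochromatic `C_{2l₁} ∪ C_{2l₂}` contains a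
matching of `l₁ + l₂` edges and so meets `l₁ + l₂` rows of one color.
-/

section NoRainbowP4

variable {N : ℕ} {γ : Type*} {c : Fin N → Fin N → γ}

lemma eq_or_eq_of_not_rbP4pat (hc : ¬ rbP4pat c) {u u' v v' : Fin N} (hu : u ≠ u')
    (hv : c u v ≠ c u v') : c u' v = c u v ∨ c u' v = c u v' := by
  by_contra! h
  exact hc ⟨u', u, v, v', hu.symm, fun hvv => hv (congrArg _ hvv), h.1, h.2, hv⟩

lemma apply_eq_of_not_rbP4pat (hc : ¬ rbP4pat c) {u₀ u v a b : Fin N}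
    (hab : c u₀ a ≠ c u₀ b) (ha : c u v ≠ c u₀ a) (hb : c u v ≠ c u₀ b) :
    c u₀ v = c u v := by
  by_contra hne
  have hu : u₀ ≠ u := by rintro rfl; exact hne rfl
  have hrow : ∀ w, c u v ≠ c u₀ w → c u₀ v = c u₀ w := fun w hw => by
    by_contra h
    rcases eq_or_eq_of_not_rbP4pat hc hu h with h' | h'
    exacts [hne h'.symm, hw h']
  exact hab ((hrow a ha).symm.trans (hrow b hb))

lemma apply_eq_of_three_colors (hc : ¬ rbP4pat c) {u₀ a b e : Fin N}
    (hab : c u₀ a ≠ c u₀ b) (hae : c u₀ a ≠ c u₀ e) (hbe : c u₀ b ≠ c u₀ e) (u v : Fin N) :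
    c u₀ v = c u v := by
  by_cases ha : c u v = c u₀ a
  · exact apply_eq_of_not_rbP4pat hc hbe (fun h => hab (ha.symm.trans h))
      (fun h => hae (ha.symm.trans h))
  by_cases hb : c u v = c u₀ b
  · exact apply_eq_of_not_rbP4pat hc hae ha (fun h => hbe (hb.symm.trans h))
  exact apply_eq_of_not_rbP4pat hc hab ha hb

lemma rows_const_or_cols_const (hc : ¬ rbP4pat c)
    (h3 : ∀ x y : γ, ∃ u v, c u v ≠ x ∧ c u v ≠ y) :
    (∀ u v v', c u v = c u v') ∨ (∀ u u' v, c u v = c u' v) := by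
  by_contra! h
  obtain ⟨⟨u₀, a, b, hab⟩, ⟨u₁, u₂, w, hw⟩⟩ := h
  obtain ⟨u, v, ha, hb⟩ := h3 (c u₀ a) (c u₀ b)
  have hv := apply_eq_of_not_rbP4pat hc hab ha hb
  have hcol := apply_eq_of_three_colors hc hab (hv ▸ ha.symm) (hv ▸ hb.symm)
  exact hw ((hcol u₁ w).symm.trans (hcol u₂ w))

lemma not_hasRainbowP4_of_rows_const (hrow : ∀ u v v', c u v = c u v') :
    ¬ hasRainbowP4 c := by
  rintro (⟨-, u₂, v₁, v₂, -, -, -, -, h⟩ | ⟨u₁, u₂, v₁, -, -, -, h, -, -⟩)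
  · exact h (hrow u₂ v₁ v₂)
  · exact h (hrow v₁ u₁ u₂)

end NoRainbowP4

lemma exists_ne_ne_of_surjective {N k : ℕ} (hk : 3 ≤ k) {c : Fin N → Fin N → Fin k}
    (hsurj : ∀ i, ∃ u v, c u v = i) (x y : Fin k) : ∃ u v, c u v ≠ x ∧ c u v ≠ y := by
  obtain ⟨e, -, he⟩ := exists_mem_notMem_of_card_lt_card (s := {x, y}) (t := univ)
    (card_le_two.trans_lt (by simp; omega))
  obtain ⟨u, v, rfl⟩ := hsurj e
  exact ⟨u, v, by simpa [not_or] using he⟩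

section MonoCopy

variable {N : ℕ} {γ α : Type*} {c : Fin N → Fin N → γ}

lemma exists_large_mono_rows [Fintype γ] [DecidableEq γ] (hrow : ∀ u v v', c u v = c u v')
    {n : ℕ} (hN : Fintype.card γ * n < N) : ∃ i S, n < #S ∧ ∀ u ∈ S, ∀ v, c u v = i := by
  have v₀ : Fin N := ⟨0, by omega⟩
  obtain ⟨i, hi⟩ := Fintype.exists_lt_card_fiber_of_mul_lt_card (fun u => c u v₀) (by simpa)
  exact ⟨i, _, hi, fun u hu v => (hrow u v v₀).trans (mem_filter.1 hu).2⟩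

lemma hasMonoCopy_of_isContained_completeBipartiteGraph {V W : Type*} [Fintype V] [Fintype W]
    {H : SimpleGraph α} (hH : H ⊑ completeBipartiteGraph V W) {i : γ} {S T : Finset (Fin N)}
    (hS : Fintype.card V ≤ #S) (hT : Fintype.card W ≤ #T) (hc : ∀ u ∈ S, ∀ v ∈ T, c u v = i) :
    hasMonoCopy c H := by
  obtain ⟨f⟩ := hH
  obtain ⟨eS⟩ := Function.Embedding.nonempty_of_card_le (β := S) (by simpa using hS)
  obtain ⟨eT⟩ := Function.Embedding.nonempty_of_card_le (β := T) (by simpa using hT)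
  refine ⟨i, Sum.map (Subtype.val ∘ eS) (Subtype.val ∘ eT) ∘ f,
    (Sum.map_injective.2 ⟨Subtype.val_injective.comp eS.injective,
      Subtype.val_injective.comp eT.injective⟩).comp f.injective, fun a b hab => ?_⟩
  have hfab := f.toHom.map_adj hab
  rcases hfa : f a with x | y <;> rcases hfb : f b with x' | y' <;>
    simp [hfa, hfb] at hfab
  · exact ⟨eS x, eT y', hc _ (eS x).2 _ (eT y').2, Or.inl ⟨by simp [hfa], by simp [hfb]⟩⟩
  · exact ⟨eS x', eT y, hc _ (eS x').2 _ (eT y).2, Or.inr ⟨by simp [hfa], by simp [hfb]⟩⟩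

lemma hasMonoCopy.exists_card_le_rows [DecidableEq γ] {ι : Type*} [Fintype ι]
    {H : SimpleGraph α} (hH : hasMonoCopy c H) {a b : ι → α} (hadj : ∀ j, H.Adj (a j) (b j))
    (ha : Injective a) (hb : Injective b) (hab : ∀ j j', a j ≠ b j') :
    ∃ i, Fintype.card ι ≤ #{u | ∃ v, c u v = i} := by
  obtain ⟨i, f, hf, hedge⟩ := hH
  have hrow : ∀ j, ∃ u, (∃ v, c u v = i) ∧ (f (a j) = .inl u ∨ f (b j) = .inl u) := fun j => by
    obtain ⟨u, v, huv, h | h⟩ := hedge _ _ (hadj j)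
    exacts [⟨u, ⟨v, huv⟩, Or.inl h.1⟩, ⟨u, ⟨v, huv⟩, Or.inr h.2⟩]
  choose r hri hr using hrow
  refine ⟨i, card_le_card_of_injOn r (fun j _ => by simpa using hri j) fun j _ j' _ e => ?_⟩
  rcases hr j with h | h <;> rcases hr j' with h' | h' <;> rw [e, ← h'] at h <;>
    have h := hf h
  exacts [ha h, absurd h (hab j j'), absurd h.symm (hab j' j), hb h]

end MonoCopy

section EvenCycles

lemma cycleGraph_two_mul_adj_mod_two {l : ℕ} {u v : Fin (2 * l)}
    (h : (cycleGraph (2 * l)).Adj u v) : u.val % 2 ≠ v.val % 2 := by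
  have hodd : ∀ x y : Fin (2 * l), (x - y).val = 1 → x.val % 2 ≠ y.val % 2 := by
    intro x y hxy
    rw [Fin.sub_def] at hxy
    have := Nat.mod_mod_of_dvd (2 * l - y + x) (dvd_mul_right 2 l)
    simp only at hxy
    omega
  rcases cycleGraph_adj'.1 h with h | h
  exacts [hodd u v h, (hodd v u h).symm]

lemma cycleGraph_two_mul_isContained (l : ℕ) :
    cycleGraph (2 * l) ⊑ completeBipartiteGraph (Fin l) (Fin l) := by
  let f : Fin (2 * l) → Fin l ⊕ Fin l := fun j =>
    if j.val % 2 = 0 then .inl ⟨j / 2, by omega⟩ else .inr ⟨j / 2, by omega⟩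
  refine ⟨⟨⟨f, fun {u v} h => ?_⟩, fun u v h => ?_⟩⟩
  · have := cycleGraph_two_mul_adj_mod_two h
    by_cases hu : u.val % 2 = 0 <;> by_cases hv : v.val % 2 = 0 <;> simp [f, hu, hv] <;> omega
  · by_cases hu : u.val % 2 = 0 <;> by_cases hv : v.val % 2 = 0 <;>
      simp [f, hu, hv, Fin.ext_iff] at h ⊢ <;> omega

lemma cycleGraph_two_mul_adj (l : ℕ) (j : Fin l) :
    (cycleGraph (2 * l)).Adj ⟨2 * j, by omega⟩ ⟨2 * j + 1, by omega⟩ :=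
  pathGraph_le_cycleGraph (pathGraph_adj.2 (Or.inl rfl))

lemma sum_isContained_completeBipartiteGraph {α β V₁ W₁ V₂ W₂ : Type*} {H₁ : SimpleGraph α}
    {H₂ : SimpleGraph β} (h₁ : H₁ ⊑ completeBipartiteGraph V₁ W₁)
    (h₂ : H₂ ⊑ completeBipartiteGraph V₂ W₂) :
    H₁ ⊕g H₂ ⊑ completeBipartiteGraph (V₁ ⊕ V₂) (W₁ ⊕ W₂) := by
  obtain ⟨f₁⟩ := h₁
  obtain ⟨f₂⟩ := h₂
  refine ⟨⟨⟨Equiv.sumSumSumComm V₁ W₁ V₂ W₂ ∘ Sum.map f₁ f₂, fun {x y} h => ?_⟩,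
    (Equiv.injective _).comp (Sum.map_injective.2 ⟨f₁.injective, f₂.injective⟩)⟩⟩
  rcases x with x | x <;> rcases y with y | y <;> simp at h
  · have := f₁.toHom.map_adj h
    rcases hx : f₁ x with _ | _ <;> rcases hy : f₁ y with _ | _ <;> simp_all
  · have := f₂.toHom.map_adj h
    rcases hx : f₂ x with _ | _ <;> rcases hy : f₂ y with _ | _ <;> simp_all

end EvenCycles

lemma hasMonoCopy.exists_card_le_rows_of_cycles {N l₁ l₂ : ℕ} {γ : Type*} [DecidableEq γ]
    {c : Fin N → Fin N → γ} (h : hasMonoCopy c (cycleGraph (2 * l₁) ⊕g cycleGraph (2 * l₂))) :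
    ∃ i, l₁ + l₂ ≤ #{u | ∃ v, c u v = i} := by
  let a : Fin l₁ ⊕ Fin l₂ → Fin (2 * l₁) ⊕ Fin (2 * l₂) :=
    Sum.map (fun j => ⟨2 * j, by omega⟩) (fun j => ⟨2 * j, by omega⟩)
  let b : Fin l₁ ⊕ Fin l₂ → Fin (2 * l₁) ⊕ Fin (2 * l₂) :=
    Sum.map (fun j => ⟨2 * j + 1, by omega⟩) (fun j => ⟨2 * j + 1, by omega⟩)
  have hadj : ∀ j, (cycleGraph (2 * l₁) ⊕g cycleGraph (2 * l₂)).Adj (a j) (b j) := by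
    rintro (j | j)
    exacts [sum_adj_inl.2 (cycleGraph_two_mul_adj l₁ j), sum_adj_inr.2 (cycleGraph_two_mul_adj l₂ j)]
  have ha : Injective a := Sum.map_injective.2
    ⟨fun j j' h => by simpa [Fin.ext_iff] using h, fun j j' h => by simpa [Fin.ext_iff] using h⟩
  have hb : Injective b := Sum.map_injective.2
    ⟨fun j j' h => by simpa [Fin.ext_iff] using h, fun j j' h => by simpa [Fin.ext_iff] using h⟩
  have hab : ∀ j j', a j ≠ b j' := by
    rintro (j | j) (j' | j') h <;> simp [a, b, Fin.ext_iff] at h <;> omega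
  simpa using h.exists_card_le_rows hadj ha hb hab

lemma hasRainbowP4_or_hasMonoCopy {k l₁ l₂ N : ℕ} (hk : 3 ≤ k) (hN : k * (l₁ + l₂ - 1) < N)
    (c : Fin N → Fin N → Fin k) (hsurj : ∀ i, ∃ u v, c u v = i) :
    hasRainbowP4 c ∨ hasMonoCopy c (cycleGraph (2 * l₁) ⊕g cycleGraph (2 * l₂)) := by
  refine or_iff_not_imp_left.2 fun hr => ?_
  have hH := sum_isContained_completeBipartiteGraph (cycleGraph_two_mul_isContained l₁)
    (cycleGraph_two_mul_isContained l₂)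
  have hcard : Fintype.card (Fin l₁ ⊕ Fin l₂) = l₁ + l₂ := by simp
  rcases rows_const_or_cols_const (fun h => hr (Or.inl h)) (exists_ne_ne_of_surjective hk hsurj)
    with hrow | hcol
  · obtain ⟨i, S, hS, hSi⟩ := exists_large_mono_rows hrow (by simpa using hN)
    have := card_le_univ S
    exact hasMonoCopy_of_isContained_completeBipartiteGraph hH (T := univ) (by omega)
      (by simp at this ⊢; omega) fun u hu v _ => hSi u hu v
  · obtain ⟨i, T, hT, hTi⟩ := exists_large_mono_rows (c := fun v u => c u v)
      (fun v u u' => hcol u u' v) (by simpa using hN)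
    have := card_le_univ T
    exact hasMonoCopy_of_isContained_completeBipartiteGraph hH (S := univ)
      (by simp at this ⊢; omega) (by omega) fun u _ v hv => hTi v hv u

/-- Row `u` of `K_{ks,ks}` gets the color of the block `⌊u / s⌋`. -/
def blockColoring (k s : ℕ) : Fin (k * s) → Fin (k * s) → Fin k :=
  fun u _ => (finProdFinEquiv.symm u).1

lemma blockColoring_surjective {k s : ℕ} (hs : 0 < s) (i : Fin k) :
    ∃ u v, blockColoring k s u v = i :=
  ⟨finProdFinEquiv (i, ⟨0, hs⟩), finProdFinEquiv (i, ⟨0, hs⟩), by simp [blockColoring]⟩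

lemma card_blockColoring_rows_le {k s : ℕ} (i : Fin k) :
    #{u | ∃ v, blockColoring k s u v = i} ≤ s := by
  refine (card_le_card_of_injOn (fun u => (finProdFinEquiv.symm u).2) (t := univ)
    (fun _ _ => mem_coe.2 (mem_univ _)) fun u hu u' hu' h => ?_).trans (by simp)
  obtain ⟨-, v, hv⟩ := mem_filter.1 (mem_coe.1 hu)
  obtain ⟨-, v', hv'⟩ := mem_filter.1 (mem_coe.1 hu')
  exact finProdFinEquiv.symm.injective (Prod.ext (hv.trans hv'.symm) h)

lemma lt_of_bgrP4CC {k l₁ l₂ m : ℕ} (hl : 2 ≤ l₁ + l₂) (hm : bgrP4CC k l₁ l₂ m) :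
    k * (l₁ + l₂ - 1) < m := by
  by_contra! hle
  rcases hm.2 _ hle _ (blockColoring_surjective (by omega)) with h | h
  · exact not_hasRainbowP4_of_rows_const (fun _ _ _ => rfl) h
  · obtain ⟨i, hi⟩ := h.exists_card_le_rows_of_cycles
    have := card_blockColoring_rows_le (k := k) (s := l₁ + l₂ - 1) i
    omega

/-- for `k ≥ 3`, `l₁, l₂ ≥ 2`,
`bgr_k(P₄ : C_{2l₁} ∪ C_{2l₂}) = k(l₁+l₂) − k + 1`. -/
theorem stmt6 (k l1 l2 : ℕ) (hk : 3 ≤ k) (h1 : 2 ≤ l1) (h2 : 2 ≤ l2) :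
    bgrP4CC k l1 l2 (k * (l1 + l2) - k + 1) ∧
    (∀ m : ℕ, bgrP4CC k l1 l2 m → k * (l1 + l2) - k + 1 ≤ m) := by
  rw [← Nat.mul_sub_one]
  have hk_le : k ≤ k * (l1 + l2 - 1) := Nat.le_mul_of_pos_right k (by omega)
  refine ⟨⟨?_, fun N hN => hasRainbowP4_or_hasMonoCopy hk hN⟩,
    fun m hm => lt_of_bgrP4CC (by omega) hm⟩
  exact (Nat.le_succ_of_le hk_le).trans (Nat.le_self_pow two_ne_zero _)
end

section
/- For integers k ≥ 4, l ≥ 10, r ≥ 1, let n = kr⌊l/2⌋ − k. There is an edge-coloring of K_{n,n} = G(U,V) with exactly k colors containing no rainbow path P_5 on 5 vertices and no monochromatic copy of r disjoint copies of P_l. Namely, partition V into k parts V_1,…,V_k of size r⌊l/2⌋ − 1 and color all edges from U to V_i with color i. -/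
open Function Finset SimpleGraph

/-- `r` vertex-disjoint copies of the path on `l` vertices. -/
def manyPaths (r l : ℕ) : SimpleGraph (Σ _ : Fin r, Fin l) :=
  sigmaUnion (fun _ : Fin r => pathGraph l)

/-!
Color every edge `uv` by the part `V_i` containing `v`. Every `P₅` has an inner vertex in `V`, and
its two edges there have the same color, so no `P₅` is rainbow. In a copy of `rP_l` of color `i`, the
edges `{2s, 2s+1}` (`s < ⌊l/2⌋`) of the `r` paths form a matching of `r⌊l/2⌋` edges; each of them
has its `V`-endpoint in `V_i`, and these endpoints are distinct, while `|V_i| = r⌊l/2⌋ - 1`.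
-/

theorem Fintype.exists_fiber_card_eq {α : Type*} [Fintype α] {k m : ℕ}
    (h : Fintype.card α = k * m) :
    ∃ p : α → Fin k, ∀ i, #{v | p v = i} = m := by
  let e : α ≃ Fin k × Fin m := (Fintype.equivFinOfCardEq h).trans finProdFinEquiv.symm
  refine ⟨fun v => (e v).1, fun i => ?_⟩
  have hfiber : ({v | (e v).1 = i} : Finset α) =
      univ.map ((Embedding.sectR i (Fin m)).trans e.symm.toEmbedding) := by
    ext v
    simp only [mem_filter, mem_univ, true_and, mem_map, Embedding.trans_apply,
      Embedding.sectR_apply, Equiv.coe_toEmbedding]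
    constructor
    · rintro rfl
      exact ⟨(e v).2, by simp⟩
    · rintro ⟨b, rfl⟩
      simp
  rw [hfiber, card_map, card_univ, Fintype.card_fin]

theorem not_hasRainbowP5_of_eq_right {N : ℕ} {γ : Type*} (g : Fin N → γ) :
    ¬ hasRainbowP5 (fun (_ v : Fin N) => g v) := by
  rintro (⟨_, _, _, _, _, _, _, _, _, h, _⟩ | ⟨_, _, _, _, _, _, _, _, _, _, _, _, h, _⟩) <;>
    exact h rfl

theorem hasMonoCopy.exists_card_le_of_matching {N : ℕ} {γ α ι : Type*} [Fintype ι]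
    [DecidableEq γ] {g : Fin N → γ} {H : SimpleGraph α}
    (hmono : hasMonoCopy (fun (_ v : Fin N) => g v) H) {φ : ι × Fin 2 → α} (hφ : Injective φ)
    (hadj : ∀ j, H.Adj (φ (j, 0)) (φ (j, 1))) :
    ∃ i, Fintype.card ι ≤ #{v | g v = i} := by
  obtain ⟨i, f, hf, hedge⟩ := hmono
  have hright : ∀ j, ∃ t v, f (φ (j, t)) = Sum.inr v ∧ g v = i := by
    intro j
    obtain ⟨u, v, hv, ⟨-, h1⟩ | ⟨h0, -⟩⟩ := hedge _ _ (hadj j)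
    exacts [⟨1, v, h1, hv⟩, ⟨0, v, h0, hv⟩]
  choose t F hF hFi using hright
  have hFinj : Injective F := fun j j' h =>
    congrArg Prod.fst (hφ (hf ((hF j).trans (h ▸ (hF j').symm))))
  refine ⟨i, ?_⟩
  rw [← card_univ]
  exact card_le_card_of_injOn F (fun j _ => by simpa using hFi j) hFinj.injOn

-- `((j, s), t)` is vertex `2s + t` of the `j`-th path.
def manyPathsMatching (r l : ℕ) : (Fin r × Fin (l / 2)) × Fin 2 → Σ _ : Fin r, Fin l :=
  fun x => ⟨x.1.1, Fin.castLE (Nat.div_mul_le_self l 2) (finProdFinEquiv (x.1.2, x.2))⟩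

theorem manyPathsMatching_injective (r l : ℕ) : Injective (manyPathsMatching r l) := by
  rintro ⟨⟨j, s⟩, t⟩ ⟨⟨j', s'⟩, t'⟩ h
  simp only [manyPathsMatching, Sigma.mk.injEq] at h
  obtain ⟨rfl, h⟩ := h
  have := finProdFinEquiv.injective (Fin.castLE_injective _ (eq_of_heq h))
  simp_all

theorem manyPaths_adj_manyPathsMatching (r l : ℕ) (j : Fin r × Fin (l / 2)) :
    (manyPaths r l).Adj (manyPathsMatching r l (j, 0)) (manyPathsMatching r l (j, 1)) :=
  ⟨j.1, _, _, pathGraph_adj.mpr (Or.inl (by simp [finProdFinEquiv]; omega)), rfl, rfl⟩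

theorem stmt9_general (k r l : ℕ) (hl : 10 ≤ l) (hr : 1 ≤ r) :
    ∃ p : Fin (k * r * (l / 2) - k) → Fin k,
      (∀ i : Fin k, (Finset.univ.filter (fun v => p v = i)).card = r * (l / 2) - 1) ∧
      ¬ hasRainbowP5 (fun (_ v : Fin (k * r * (l / 2) - k)) => p v) ∧
      ¬ hasMonoCopy (fun (_ v : Fin (k * r * (l / 2) - k)) => p v) (manyPaths r l) := by
  have hcard : Fintype.card (Fin (k * r * (l / 2) - k)) = k * (r * (l / 2) - 1) := by
    rw [Fintype.card_fin, Nat.mul_sub, mul_one, mul_assoc]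
  obtain ⟨p, hp⟩ := Fintype.exists_fiber_card_eq hcard
  refine ⟨p, hp, not_hasRainbowP5_of_eq_right p, fun hmono => ?_⟩
  obtain ⟨i, hi⟩ := hmono.exists_card_le_of_matching (manyPathsMatching_injective r l)
    (manyPaths_adj_manyPathsMatching r l)
  have hpos : 0 < r * (l / 2) := Nat.mul_pos (by omega) (by omega)
  rw [hp, Fintype.card_prod, Fintype.card_fin, Fintype.card_fin] at hi
  omega

/-- for `k ≥ 4`, `l ≥ 10`, `r ≥ 1` and `n = kr⌊l/2⌋ − k`, partitioning
`V` into `k` parts of size `r⌊l/2⌋ − 1` and coloring all edges from `U` to `V_i`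
with color `i` yields an exact `k`-coloring of `K_{n,n}` with no rainbow `P₅` and no
monochromatic `rP_l`. -/
theorem stmt9 (k r l : ℕ) (hk : 4 ≤ k) (hl : 10 ≤ l) (hr : 1 ≤ r) :
    ∃ p : Fin (k * r * (l / 2) - k) → Fin k,
      (∀ i : Fin k, (Finset.univ.filter (fun v => p v = i)).card = r * (l / 2) - 1) ∧
      ¬ hasRainbowP5 (fun (_ v : Fin (k * r * (l / 2) - k)) => p v) ∧
      ¬ hasMonoCopy (fun (_ v : Fin (k * r * (l / 2) - k)) => p v) (manyPaths r l) :=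
  stmt9_general k r l hl hr
end

section
/- For integers t ≥ 3, k ≥ t + 2, and n = kt − k, there exists an edge-coloring of K_{n,n} = G(U,V) with exactly k colors containing no rainbow P_5 and no monochromatic K_{t,t}: partition V into k parts of size t − 1 and color all edges from U to the i-th part with color i. -/
open Function Finset SimpleGraph

/-!
The color of an edge `uv` depends only on its endpoint `v ∈ V`. In a path `u₁ v₁ u₂ v₂ u₃` the
edges `u₁v₁` and `u₂v₁` share `v₁`, and in a path `v₁ u₁ v₂ u₂ v₃` the edges `u₁v₂` and `u₂v₂`
share `v₂`, so no `P₅` is rainbow. In a monochromatic `K_{t,t}` of color `i`, the side lying in `V`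
is contained in the `i`-th part, which has only `t - 1` vertices.
-/

section ColoringByRightEndpoint

variable {N : ℕ} {γ : Type*}

theorem not_hasRainbowP5_of_right (p : Fin N → γ) :
    ¬ hasRainbowP5 (fun (_ v : Fin N) => p v) := by
  rintro (⟨_, _, _, _, _, _, _, _, _, h, _⟩ | ⟨_, _, _, _, _, _, _, _, _, _, _, _, h, _⟩) <;>
    exact h rfl

theorem not_hasMonoKst_of_right [DecidableEq γ] (p : Fin N → γ) (s t : ℕ)
    (hfiber : ∀ i, #{v | p v = i} < min s t) :
    ¬ hasMonoKst (fun (_ v : Fin N) => p v) s t := by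
  rintro ⟨i, S, T, hST, hmono⟩
  have hi := hfiber i
  obtain ⟨u, hu⟩ : S.Nonempty := card_pos.mp (by omega)
  have hT : #T ≤ #{v | p v = i} :=
    card_le_card fun v hv => mem_filter.mpr ⟨mem_univ v, hmono u hu v hv⟩
  omega

end ColoringByRightEndpoint

theorem card_filter_fst_equiv_eq {α β δ : Type*} [Fintype α] [Fintype δ] [DecidableEq β]
    (e : α ≃ β × δ) (b : β) : #{a | (e a).1 = b} = Fintype.card δ := by
  rw [card_equiv e (t := {b} ×ˢ univ) (fun a => by simp [Prod.ext_iff, eq_comm]),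
    card_product, card_singleton, one_mul, card_univ]

theorem stmt13_general (k t : ℕ) (ht : 3 ≤ t) :
    ∃ p : Fin (k * t - k) → Fin k,
      (∀ i : Fin k, (Finset.univ.filter (fun v => p v = i)).card = t - 1) ∧
      ¬ hasRainbowP5 (fun (_ v : Fin (k * t - k)) => p v) ∧
      ¬ hasMonoKst (fun (_ v : Fin (k * t - k)) => p v) t t := by
  have hN : k * t - k = k * (t - 1) := by rw [Nat.mul_sub, mul_one]
  let e : Fin (k * t - k) ≃ Fin k × Fin (t - 1) := (finCongr hN).trans finProdFinEquiv.symm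
  have hfiber (i : Fin k) : #{v | (e v).1 = i} = t - 1 := by
    rw [card_filter_fst_equiv_eq, Fintype.card_fin]
  refine ⟨fun v => (e v).1, hfiber, not_hasRainbowP5_of_right _, ?_⟩
  refine not_hasMonoKst_of_right _ t t fun i => ?_
  rw [hfiber, min_self]
  omega

/-- for `t ≥ 3`, `k ≥ t + 2` and `n = kt − k`, partitioning `V` into
`k` parts of size `t − 1` and coloring all edges from `U` to the `i`-th part with
color `i` yields an exact `k`-coloring of `K_{n,n}` with no rainbow `P₅` and no
monochromatic `K_{t,t}`. -/
theorem stmt13 (k t : ℕ) (ht : 3 ≤ t) (hk : t + 2 ≤ k) :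
    ∃ p : Fin (k * t - k) → Fin k,
      (∀ i : Fin k, (Finset.univ.filter (fun v => p v = i)).card = t - 1) ∧
      ¬ hasRainbowP5 (fun (_ v : Fin (k * t - k)) => p v) ∧
      ¬ hasMonoKst (fun (_ v : Fin (k * t - k)) => p v) t t :=
  stmt13_general k t ht
end

section
/- For integers t ≥ 5 and t ≤ k ≤ t + 1, bgr_k(K_{1,3} : K_{1,t}) = t + 1. -/
open Function Finset SimpleGraph

/-- `n` witnesses the bipartite Gallai–Ramsey property for a rainbow `K_{1,3}`
versus a monochromatic `K_{1,t}` with `k` colors. -/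
def bgrK13K1t (k t n : ℕ) : Prop :=
  k ≤ n ^ 2 ∧ ∀ N : ℕ, n ≤ N → ∀ c : Fin N → Fin N → Fin k,
    (∀ i : Fin k, ∃ u v, c u v = i) →
    hasRainbowK13 c ∨ hasMonoKst c 1 t

/-!
Without a rainbow `K_{1,3}` every row and every column carries at most two colours. Two rows with
disjoint palettes would confine all colours to four, so the row palettes pairwise intersect; as
there are at least five colours they do not lie inside a triangle, hence share a colour `x`. Each
row then meets at most one colour `y ≠ x`, and the rows meeting `y` number at least `N + 1 - t`,
since a column containing `y` has fewer than `t` cells of its other colour. Thus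
`(k - 1)(N + 1 - t) ≤ N`, which fails for `N > t ≥ 5` and `k ≥ t`.

For the lower bound, colour `K_{t,t}` with `0` off the diagonal and the `k - 1 ≤ t` nonzero colours
on the diagonal: every row and column has two colours, each of them missing somewhere.
-/

namespace Finset

variable {ι γ : Type*} [DecidableEq γ]

theorem eq_or_eq_or_eq_of_card_le_two {s : Finset γ} (hs : #s ≤ 2) {x y z : γ}
    (hx : x ∈ s) (hy : y ∈ s) (hz : z ∈ s) : x = y ∨ x = z ∨ y = z := by
  by_contra! h
  exact (two_lt_card.2 ⟨x, hx, y, hy, z, hz, h⟩).not_ge hs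

theorem exists_forall_mem_or_exists_forall_subset_of_card_le_two [Nonempty ι] (P : ι → Finset γ)
    (hP : ∀ i, #(P i) ≤ 2) (hmeet : ∀ i j, ¬Disjoint (P i) (P j)) :
    (∃ x, ∀ i, x ∈ P i) ∨ ∃ a b d : γ, ∀ i, P i ⊆ {a, b, d} := by
  have meet (i j : ι) : ∃ x ∈ P i, x ∈ P j := not_disjoint_iff.1 (hmeet i j)
  by_contra! ⟨hstar, htri⟩
  obtain ⟨i₀⟩ := ‹Nonempty ι›
  obtain ⟨a, ha₀, -⟩ := meet i₀ i₀
  obtain ⟨j, haj⟩ := hstar a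
  obtain ⟨b, hb₀, hbj⟩ := meet i₀ j
  obtain ⟨l, hbl⟩ := hstar b
  obtain ⟨a', ha'₀, ha'l⟩ := meet i₀ l
  obtain ⟨d, hdj, hdl⟩ := meet j l
  -- `P i₀ ∋ a, b`, `P j ∋ b, d` and `P l ∋ a, d` span a triangle; a set of size at most two
  -- meeting all three sides lies inside it.
  obtain ⟨i, hi⟩ := htri a b d
  obtain ⟨e, he, hne⟩ := not_subset.1 hi
  obtain ⟨f, hfi, hf₀⟩ := meet i i₀
  obtain ⟨g, hgi, hgj⟩ := meet i j
  obtain ⟨h, hhi, hhl⟩ := meet i l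
  have := eq_or_eq_or_eq_of_card_le_two (hP i₀) ha₀ hb₀ ha'₀
  have := eq_or_eq_or_eq_of_card_le_two (hP i₀) ha₀ hb₀ hf₀
  have := eq_or_eq_or_eq_of_card_le_two (hP j) hbj hdj hgj
  have := eq_or_eq_or_eq_of_card_le_two (hP l) ha'l hdl hhl
  have := eq_or_eq_or_eq_of_card_le_two (hP i) he hfi hgi
  have := eq_or_eq_or_eq_of_card_le_two (hP i) he hfi hhi
  simp only [mem_insert, mem_singleton] at hne
  grind

end Finset

section Coloring

variable {α β γ : Type*} [Fintype α] [Fintype β] [DecidableEq γ] {c : α → β → γ}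

theorem card_image_le_two_of_not_exists_three_ne {f : α → γ}
    (h : ¬∃ a b c, f a ≠ f b ∧ f a ≠ f c ∧ f b ≠ f c) : #(univ.image f) ≤ 2 := by
  rw [← not_lt, two_lt_card]
  simpa using h

theorem eq_or_eq_of_card_image_le_two {f : α → γ} (hf : #(univ.image f) ≤ 2) {a b : α}
    (hab : f a ≠ f b) (x : α) : f x = f a ∨ f x = f b := by
  have := eq_or_eq_or_eq_of_card_le_two hf (mem_image_of_mem f (mem_univ x))
    (mem_image_of_mem f (mem_univ a)) (mem_image_of_mem f (mem_univ b))
  tauto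

theorem card_le_card_filter_eq_of_card_image_le_two {f : α → γ} {t : ℕ}
    (hf : #(univ.image f) ≤ 2) (hlt : ∀ y, #{a | f a = y} < t) (a : α) :
    Fintype.card α + 1 - t ≤ #{x | f x = f a} := by
  have hrest : #{x | ¬f x = f a} < t := by
    rcases eq_empty_or_nonempty ({x | ¬f x = f a} : Finset α) with h | ⟨b, hb⟩
    · rw [h, card_empty]
      exact Nat.zero_lt_of_lt (hlt (f a))
    · refine (card_le_card fun x hx => ?_).trans_lt (hlt (f b))
      simp only [mem_filter, mem_univ, true_and] at hb hx ⊢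
      exact (eq_or_eq_of_card_image_le_two hf (Ne.symm hb) x).resolve_left hx
  have := card_filter_add_card_filter_not (s := univ) (fun x => f x = f a)
  rw [card_univ] at this
  omega

theorem mem_image_union_of_disjoint (hcol : ∀ v, #(univ.image (c · v)) ≤ 2) {u₁ u₂ : α}
    (hdisj : Disjoint (univ.image (c u₁)) (univ.image (c u₂))) (u : α) (v : β) :
    c u v ∈ univ.image (c u₁) ∪ univ.image (c u₂) := by
  have hne : c u₁ v ≠ c u₂ v := disjoint_iff_ne.1 hdisj _ (by simp) _ (by simp)
  rcases eq_or_eq_of_card_image_le_two (hcol v) hne u with h | h <;> simp [h]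

theorem exists_forall_exists_eq_of_card_image_le_two [Nonempty α] [Fintype γ]
    (hrow : ∀ u, #(univ.image (c u)) ≤ 2) (hcol : ∀ v, #(univ.image (c · v)) ≤ 2)
    (hsurj : ∀ y, ∃ u v, c u v = y) (hγ : 4 < Fintype.card γ) :
    ∃ x, ∀ u, ∃ v, c u v = x := by
  have hcard_le {s : Finset γ} (hs : ∀ u v, c u v ∈ s) : Fintype.card γ ≤ #s := by
    refine card_le_card fun y _ => ?_
    obtain ⟨u, v, rfl⟩ := hsurj y
    exact hs u v
  have hmeet (u₁ u₂ : α) : ¬Disjoint (univ.image (c u₁)) (univ.image (c u₂)) := fun hdisj => by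
    have := (hcard_le (mem_image_union_of_disjoint hcol hdisj)).trans (card_union_le _ _)
    have := hrow u₁
    have := hrow u₂
    omega
  rcases exists_forall_mem_or_exists_forall_subset_of_card_le_two _ hrow hmeet with
    ⟨x, hx⟩ | ⟨a, b, d, habd⟩
  · exact ⟨x, fun u => by simpa using hx u⟩
  · have := (hcard_le fun u v => habd u (by simp)).trans card_le_three
    omega

theorem card_sub_one_mul_le_card_of_forall_exists_eq [DecidableEq α] [Fintype γ] {t : ℕ} {x : γ}
    (hrow : ∀ u, #(univ.image (c u)) ≤ 2) (hcol : ∀ v, #(univ.image (c · v)) ≤ 2)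
    (hcolMono : ∀ v y, #{u | c u v = y} < t) (hsurj : ∀ y, ∃ u v, c u v = y)
    (hx : ∀ u, ∃ v, c u v = x) :
    (Fintype.card γ - 1) * (Fintype.card α + 1 - t) ≤ Fintype.card α := by
  set R : γ → Finset α := fun y => {u | ∃ v, c u v = y}
  have hR (y : γ) : Fintype.card α + 1 - t ≤ #(R y) := by
    obtain ⟨u, v, rfl⟩ := hsurj y
    refine (card_le_card_filter_eq_of_card_image_le_two (hcol v) (hcolMono v) u).trans
      (card_le_card fun u' hu' => ?_)
    simp only [R, mem_filter, mem_univ, true_and] at hu' ⊢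
    exact ⟨v, hu'⟩
  have hdisj : ((univ.erase x : Finset γ) : Set γ).PairwiseDisjoint R := by
    intro y hy y' hy' hne
    refine disjoint_left.2 fun u hu hu' => ?_
    simp only [R, mem_filter, mem_univ, true_and] at hu hu'
    replace hy := (mem_erase.1 hy).1
    replace hy' := (mem_erase.1 hy').1
    obtain ⟨v, rfl⟩ := hu
    obtain ⟨v', rfl⟩ := hu'
    obtain ⟨v₀, rfl⟩ := hx u
    have := eq_or_eq_or_eq_of_card_le_two (hrow u) (mem_image_of_mem _ (mem_univ v₀))
      (mem_image_of_mem _ (mem_univ v)) (mem_image_of_mem _ (mem_univ v'))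
    grind
  calc (Fintype.card γ - 1) * (Fintype.card α + 1 - t)
      = ∑ _ ∈ univ.erase x, (Fintype.card α + 1 - t) := by simp [card_erase_of_mem]
    _ ≤ ∑ y ∈ univ.erase x, #(R y) := sum_le_sum fun y _ => hR y
    _ = #((univ.erase x).biUnion R) := (card_biUnion hdisj).symm
    _ ≤ Fintype.card α := card_le_univ _

end Coloring

section FinColoring

variable {N : ℕ} {γ : Type*} [DecidableEq γ] {c : Fin N → Fin N → γ}

theorem card_image_row_le_two (h : ¬hasRainbowK13 c) (u : Fin N) :
    #(univ.image (c u)) ≤ 2 :=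
  card_image_le_two_of_not_exists_three_ne fun ⟨v₁, v₂, v₃, hne⟩ => h (.inl ⟨u, v₁, v₂, v₃, hne⟩)

theorem card_image_col_le_two (h : ¬hasRainbowK13 c) (v : Fin N) :
    #(univ.image (c · v)) ≤ 2 :=
  card_image_le_two_of_not_exists_three_ne fun ⟨u₁, u₂, u₃, hne⟩ => h (.inr ⟨v, u₁, u₂, u₃, hne⟩)

theorem card_filter_col_lt {t : ℕ} (h : ¬hasMonoKst c 1 t) (v : Fin N) (y : γ) :
    #{u | c u v = y} < t := by
  by_contra! h2
  obtain ⟨S, hS, hSc⟩ := exists_subset_card_eq h2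
  refine h ⟨y, S, {v}, .inr ⟨hSc, card_singleton v⟩, fun u hu v' hv' => ?_⟩
  rw [mem_singleton.1 hv']
  exact (mem_filter.1 (hS hu)).2

end FinColoring

theorem not_sub_one_mul_add_one_sub_le {k t N : ℕ} (ht : 4 ≤ t) (htk : t ≤ k) (hN : t + 1 ≤ N) :
    ¬(k - 1) * (N + 1 - t) ≤ N := by
  obtain ⟨s, rfl⟩ : ∃ s, t = s + 4 := ⟨t - 4, by omega⟩
  obtain ⟨m, rfl⟩ : ∃ m, N = s + 5 + m := ⟨N - (s + 5), by omega⟩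
  obtain ⟨j, rfl⟩ : ∃ j, k = s + 4 + j := ⟨k - (s + 4), by omega⟩
  rw [show s + 5 + m + 1 - (s + 4) = m + 2 by omega, show s + 4 + j - 1 = s + 3 + j by omega]
  nlinarith

theorem hasRainbowK13_or_hasMonoKst {k t N : ℕ} (ht : 5 ≤ t) (htk : t ≤ k) (hN : t + 1 ≤ N)
    (c : Fin N → Fin N → Fin k) (hsurj : ∀ i, ∃ u v, c u v = i) :
    hasRainbowK13 c ∨ hasMonoKst c 1 t := by
  by_contra! ⟨hrb, hmono⟩
  have : Nonempty (Fin N) := ⟨⟨0, by omega⟩⟩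
  have hrow := card_image_row_le_two hrb
  have hcol := card_image_col_le_two hrb
  obtain ⟨x, hx⟩ := exists_forall_exists_eq_of_card_image_le_two hrow hcol hsurj
    (by rw [Fintype.card_fin]; omega)
  have hcount := card_sub_one_mul_le_card_of_forall_exists_eq hrow hcol
    (card_filter_col_lt hmono) hsurj hx
  rw [Fintype.card_fin, Fintype.card_fin] at hcount
  exact not_sub_one_mul_add_one_sub_le (by omega) htk hN hcount

def diagonalColoring {N : ℕ} {γ : Type*} (z : γ) (d : Fin N → γ) : Fin N → Fin N → γ :=
  fun u v => if u = v then d u else z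

section Diagonal

variable {N : ℕ} {γ : Type*} {z : γ} {d : Fin N → γ}

theorem not_hasRainbowK13_diagonalColoring : ¬hasRainbowK13 (diagonalColoring z d) := by
  rintro (⟨u, v₁, v₂, v₃, h⟩ | ⟨v, u₁, u₂, u₃, h⟩) <;> simp only [diagonalColoring] at h <;>
    split_ifs at h <;> grind

theorem not_hasMonoKst_diagonalColoring (hN : 2 ≤ N) (hd : ∀ u, d u ≠ z) :
    ¬hasMonoKst (diagonalColoring z d) 1 N := by
  have : Nontrivial (Fin N) := Fin.nontrivial_iff_two_le.2 hN
  rintro ⟨i, S, T, ⟨hS, hT⟩ | ⟨hS, hT⟩, hall⟩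
  · obtain ⟨u, rfl⟩ := card_eq_one.1 hS
    obtain rfl : T = univ := eq_univ_of_card T (by simpa using hT)
    obtain ⟨v, hv⟩ := exists_ne u
    have := hall u (mem_singleton_self u) u (mem_univ u)
    have := hall u (mem_singleton_self u) v (mem_univ v)
    simp_all [diagonalColoring, Ne.symm hv]
  · obtain ⟨v, rfl⟩ := card_eq_one.1 hT
    obtain rfl : S = univ := eq_univ_of_card S (by simpa using hS)
    obtain ⟨u, hu⟩ := exists_ne v
    have := hall v (mem_univ v) v (mem_singleton_self v)
    have := hall u (mem_univ u) v (mem_singleton_self v)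
    simp_all [diagonalColoring]

end Diagonal

theorem exists_coloring_not_hasRainbowK13_not_hasMonoKst {k t : ℕ} (ht : 2 ≤ t) (hk : 2 ≤ k)
    (hkt : k ≤ t + 1) :
    ∃ c : Fin t → Fin t → Fin k,
      (∀ i, ∃ u v, c u v = i) ∧ ¬hasRainbowK13 c ∧ ¬hasMonoKst c 1 t := by
  let d : Fin t → Fin k := fun u => ⟨min (u + 1) (k - 1), by omega⟩
  refine ⟨diagonalColoring ⟨0, by omega⟩ d, fun i => ?_, not_hasRainbowK13_diagonalColoring,
    not_hasMonoKst_diagonalColoring ht fun u => Fin.ne_of_val_ne (by dsimp [d]; omega)⟩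
  rcases Nat.eq_zero_or_pos i with hi | hi
  · refine ⟨⟨0, by omega⟩, ⟨1, by omega⟩, ?_⟩
    simp [diagonalColoring, Fin.ext_iff, hi]
  · refine ⟨⟨i - 1, by omega⟩, ⟨i - 1, by omega⟩, ?_⟩
    simp only [diagonalColoring, if_true, d, Fin.ext_iff]
    omega

/-- for `t ≥ 5` and `t ≤ k ≤ t + 1`, `bgr_k(K_{1,3} : K_{1,t}) = t + 1`. -/
theorem stmt14 (k t : ℕ) (ht : 5 ≤ t) (hk1 : t ≤ k) (hk2 : k ≤ t + 1) :
    bgrK13K1t k t (t + 1) ∧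
    (∀ n : ℕ, bgrK13K1t k t n → t + 1 ≤ n) := by
  refine ⟨⟨by nlinarith, fun N hN c hsurj => hasRainbowK13_or_hasMonoKst ht hk1 hN c hsurj⟩,
    fun n hn => ?_⟩
  by_contra! hnt
  obtain ⟨c, hsurj, hrb, hmono⟩ :=
    exists_coloring_not_hasRainbowK13_not_hasMonoKst (k := k) (by omega) (by omega) hk2
  exact (hn.2 t (by omega) c hsurj).elim hrb hmono
end
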